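/- Let Ω ⊆ M_nc be a similarity invariant right admissible nc set and f : Ω → N_nc a nc function. If X ∈ Ω_n, X̃ ∈ Ω_ñ, Y ∈ Ω_m, Ỹ ∈ Ω_m̃, Z ∈ M^{n×m}, T ∈ R^{ñ×n} and S ∈ R^{m×m̃} satisfy T X = X̃ T and Y S = S Ỹ, then T · Δ_R f(X, Y)(Z) · S = Δ_R f(X̃, Ỹ)(T Z S). In particular, Δ_R f respects intertwining in both matrix arguments. -/
import Mathlib


open Matrix

/-- Product of a scalar matrix with a matrix over a module. -/
def scalMul {R : Type*} [CommRing R] {M : Type*} [AddCommGroup M] [Module R M]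
    {p n m : ℕ} (S : Matrix (Fin p) (Fin n) R) (X : Matrix (Fin n) (Fin m) M) :
    Matrix (Fin p) (Fin m) M :=
  Matrix.of fun i j => ∑ k, S i k • X k j

/-- Product of a matrix over a module with a scalar matrix. -/
def mulScal {R : Type*} [CommRing R] {M : Type*} [AddCommGroup M] [Module R M]
    {n m q : ℕ} (X : Matrix (Fin n) (Fin m) M) (T : Matrix (Fin m) (Fin q) R) :
    Matrix (Fin n) (Fin q) M :=
  Matrix.of fun i j => ∑ k, T k j • X i k

/-- Direct sum of two square matrices over a module. -/
def dSum {M : Type*} [AddCommGroup M] {n m : ℕ}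
    (X : Matrix (Fin n) (Fin n) M) (Y : Matrix (Fin m) (Fin m) M) :
    Matrix (Fin (n + m)) (Fin (n + m)) M :=
  (Matrix.reindex finSumFinEquiv finSumFinEquiv) (Matrix.fromBlocks X 0 0 Y)

/-- Block upper triangular 2×2 block matrix `[[X, Z],[0, Y]]`. -/
def upTri {M : Type*} [AddCommGroup M] {n m : ℕ}
    (X : Matrix (Fin n) (Fin n) M) (Z : Matrix (Fin n) (Fin m) M)
    (Y : Matrix (Fin m) (Fin m) M) :
    Matrix (Fin (n + m)) (Fin (n + m)) M :=
  (Matrix.reindex finSumFinEquiv finSumFinEquiv) (Matrix.fromBlocks X Z 0 Y)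

/-- A noncommutative (nc) set: closed under direct sums. -/
def IsNCSet {M : Type*} [AddCommGroup M]
    (Ω : ∀ n : ℕ, Set (Matrix (Fin n) (Fin n) M)) : Prop :=
  ∀ (n m : ℕ) (X : Matrix (Fin n) (Fin n) M) (Y : Matrix (Fin m) (Fin m) M),
    X ∈ Ω n → Y ∈ Ω m → dSum X Y ∈ Ω (n + m)

/-- `f` respects direct sums on `Ω`. -/
def RespectsDirSums {M N : Type*} [AddCommGroup M] [AddCommGroup N]
    (Ω : ∀ n : ℕ, Set (Matrix (Fin n) (Fin n) M))
    (f : ∀ n : ℕ, Matrix (Fin n) (Fin n) M → Matrix (Fin n) (Fin n) N) : Prop :=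
  ∀ (n m : ℕ) (X : Matrix (Fin n) (Fin n) M) (Y : Matrix (Fin m) (Fin m) M),
    X ∈ Ω n → Y ∈ Ω m → f (n + m) (dSum X Y) = dSum (f n X) (f m Y)

/-- `f` respects similarities on `Ω`. -/
def RespectsSim (R : Type*) [CommRing R] {M N : Type*} [AddCommGroup M] [Module R M]
    [AddCommGroup N] [Module R N]
    (Ω : ∀ n : ℕ, Set (Matrix (Fin n) (Fin n) M))
    (f : ∀ n : ℕ, Matrix (Fin n) (Fin n) M → Matrix (Fin n) (Fin n) N) : Prop :=
  ∀ (n : ℕ) (X : Matrix (Fin n) (Fin n) M) (S T : Matrix (Fin n) (Fin n) R),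
    X ∈ Ω n → S * T = 1 → T * S = 1 → scalMul S (mulScal X T) ∈ Ω n →
    f n (scalMul S (mulScal X T)) = scalMul S (mulScal (f n X) T)

/-- `f` respects intertwining on `Ω`: `X T = T Y` implies `f(X) T = T f(Y)`. -/
def RespectsIntertwining (R : Type*) [CommRing R] {M N : Type*} [AddCommGroup M]
    [Module R M] [AddCommGroup N] [Module R N]
    (Ω : ∀ n : ℕ, Set (Matrix (Fin n) (Fin n) M))
    (f : ∀ n : ℕ, Matrix (Fin n) (Fin n) M → Matrix (Fin n) (Fin n) N) : Prop :=
  ∀ (n m : ℕ) (X : Matrix (Fin n) (Fin n) M) (Y : Matrix (Fin m) (Fin m) M)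
    (T : Matrix (Fin n) (Fin m) R),
    X ∈ Ω n → Y ∈ Ω m → mulScal X T = scalMul T Y →
    mulScal (f n X) T = scalMul T (f m Y)

/-- The (1,1) block of an `(n+m)×(n+m)` matrix. -/
def blk11 {N : Type*} {n m : ℕ} (W : Matrix (Fin (n + m)) (Fin (n + m)) N) :
    Matrix (Fin n) (Fin n) N :=
  Matrix.toBlocks₁₁ ((Matrix.reindex finSumFinEquiv.symm finSumFinEquiv.symm) W)

/-- The (1,2) block of an `(n+m)×(n+m)` matrix. -/
def blk12 {N : Type*} {n m : ℕ} (W : Matrix (Fin (n + m)) (Fin (n + m)) N) :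
    Matrix (Fin n) (Fin m) N :=
  Matrix.toBlocks₁₂ ((Matrix.reindex finSumFinEquiv.symm finSumFinEquiv.symm) W)

/-- The (2,1) block of an `(n+m)×(n+m)` matrix. -/
def blk21 {N : Type*} {n m : ℕ} (W : Matrix (Fin (n + m)) (Fin (n + m)) N) :
    Matrix (Fin m) (Fin n) N :=
  Matrix.toBlocks₂₁ ((Matrix.reindex finSumFinEquiv.symm finSumFinEquiv.symm) W)

/-- The (2,2) block of an `(n+m)×(n+m)` matrix. -/
def blk22 {N : Type*} {n m : ℕ} (W : Matrix (Fin (n + m)) (Fin (n + m)) N) :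
    Matrix (Fin m) (Fin m) N :=
  Matrix.toBlocks₂₂ ((Matrix.reindex finSumFinEquiv.symm finSumFinEquiv.symm) W)

/-- `Ω` is invariant under similarities. -/
def SimInvariant (R : Type*) [CommRing R] {M : Type*} [AddCommGroup M] [Module R M]
    (Ω : ∀ n : ℕ, Set (Matrix (Fin n) (Fin n) M)) : Prop :=
  ∀ (n : ℕ) (X : Matrix (Fin n) (Fin n) M) (S T : Matrix (Fin n) (Fin n) R),
    X ∈ Ω n → S * T = 1 → T * S = 1 → scalMul S (mulScal X T) ∈ Ω n

/-- `Ω` is a right admissible nc set. -/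
def RightAdmissible (R : Type*) [CommRing R] {M : Type*} [AddCommGroup M] [Module R M]
    (Ω : ∀ n : ℕ, Set (Matrix (Fin n) (Fin n) M)) : Prop :=
  ∀ (n m : ℕ) (X : Matrix (Fin n) (Fin n) M) (Y : Matrix (Fin m) (Fin m) M)
    (Z : Matrix (Fin n) (Fin m) M), X ∈ Ω n → Y ∈ Ω m →
    ∃ r : Rˣ, upTri X ((r : R) • Z) Y ∈ Ω (n + m)

/-- The right nc difference-differential operator: the (1,2) block of
`f([[X, Z],[0, Y]])`. -/
def deltaR (R : Type*) [CommRing R] {M : Type*} [AddCommGroup M] [Module R M]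
    {N : Type*} [AddCommGroup N] [Module R N]
    (f : ∀ n : ℕ, Matrix (Fin n) (Fin n) M → Matrix (Fin n) (Fin n) N)
    {n m : ℕ} (X : Matrix (Fin n) (Fin n) M) (Y : Matrix (Fin m) (Fin m) M)
    (Z : Matrix (Fin n) (Fin m) M) : Matrix (Fin n) (Fin m) N :=
  blk12 (f (n + m) (upTri X Z Y))

section Helpers

variable {R : Type*} [CommRing R] {M : Type*} [AddCommGroup M] [Module R M]

/-- General heterogeneous product: scalar matrix times module matrix. -/
def sMul {p n m : Type*} [Fintype n] (S : Matrix p n R) (X : Matrix n m M) :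
    Matrix p m M :=
  Matrix.of fun i j => ∑ k, S i k • X k j

/-- General heterogeneous product: module matrix times scalar matrix. -/
def mS {n m q : Type*} [Fintype m] (X : Matrix n m M) (T : Matrix m q R) :
    Matrix n q M :=
  Matrix.of fun i j => ∑ k, T k j • X i k

lemma scalMul_eq {p n m : ℕ} (S : Matrix (Fin p) (Fin n) R) (X : Matrix (Fin n) (Fin m) M) :
    scalMul S X = sMul S X := rfl

lemma mulScal_eq {n m q : ℕ} (X : Matrix (Fin n) (Fin m) M) (T : Matrix (Fin m) (Fin q) R) :
    mulScal X T = mS X T := rfl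

lemma sMul_one {n m : Type*} [Fintype n] [DecidableEq n] (X : Matrix n m M) :
    sMul (1 : Matrix n n R) X = X := by
  ext i j; simp [sMul, Matrix.one_apply, ite_smul]

lemma mS_one {n m : Type*} [Fintype m] [DecidableEq m] (X : Matrix n m M) :
    mS X (1 : Matrix m m R) = X := by
  ext i j; simp [mS, Matrix.one_apply, ite_smul]

lemma sMul_zero_left {p n m : Type*} [Fintype n] (X : Matrix n m M) :
    sMul (0 : Matrix p n R) X = 0 := by
  ext i j; simp [sMul]

lemma sMul_zero_right {p n m : Type*} [Fintype n] (S : Matrix p n R) :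
    sMul S (0 : Matrix n m M) = 0 := by
  ext i j; simp [sMul]

lemma mS_zero_left {n m q : Type*} [Fintype m] (T : Matrix m q R) :
    mS (0 : Matrix n m M) T = 0 := by
  ext i j; simp [mS]

lemma mS_zero_right {n m q : Type*} [Fintype m] (X : Matrix n m M) :
    mS X (0 : Matrix m q R) = 0 := by
  ext i j; simp [mS]

lemma mS_neg_right {n m q : Type*} [Fintype m] (X : Matrix n m M) (T : Matrix m q R) :
    mS X (-T) = -(mS X T) := by
  ext i j; simp [mS, Finset.sum_neg_distrib]

lemma sMul_smul_left {p n m : Type*} [Fintype n] (c : R) (S : Matrix p n R)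
    (X : Matrix n m M) : sMul (c • S) X = c • sMul S X := by
  ext i j; simp [sMul, Finset.smul_sum, mul_smul]

lemma sMul_smul_right {p n m : Type*} [Fintype n] (c : R) (S : Matrix p n R)
    (X : Matrix n m M) : sMul S (c • X) = c • sMul S X := by
  ext i j
  simp only [sMul, Matrix.of_apply, Matrix.smul_apply, Finset.smul_sum]
  exact Finset.sum_congr rfl fun k _ => smul_comm _ _ _

lemma mS_smul_left {n m q : Type*} [Fintype m] (c : R) (X : Matrix n m M)
    (T : Matrix m q R) : mS (c • X) T = c • mS X T := by
  ext i j
  simp only [mS, Matrix.of_apply, Matrix.smul_apply, Finset.smul_sum]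
  exact Finset.sum_congr rfl fun k _ => smul_comm _ _ _

lemma mS_smul_right {n m q : Type*} [Fintype m] (c : R) (X : Matrix n m M)
    (T : Matrix m q R) : mS X (c • T) = c • mS X T := by
  ext i j; simp [mS, Finset.smul_sum, mul_smul]

lemma sMul_smul_one {n m : Type*} [Fintype n] [DecidableEq n] (c : R) (X : Matrix n m M) :
    sMul (c • (1 : Matrix n n R)) X = c • X := by
  rw [sMul_smul_left, sMul_one]

lemma mS_smul_one {n m : Type*} [Fintype m] [DecidableEq m] (c : R) (X : Matrix n m M) :
    mS X (c • (1 : Matrix m m R)) = c • X := by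
  rw [mS_smul_right, mS_one]

lemma sMul_mS {p n m q : Type*} [Fintype n] [Fintype m] (S : Matrix p n R)
    (X : Matrix n m M) (T : Matrix m q R) :
    sMul S (mS X T) = mS (sMul S X) T := by
  ext i j
  simp only [sMul, mS, Matrix.of_apply, Finset.smul_sum]
  rw [Finset.sum_comm]
  exact Finset.sum_congr rfl fun k _ => Finset.sum_congr rfl fun l _ => smul_comm _ _ _

lemma sMul_reindex {p p' n n' m m' : Type*} [Fintype n] [Fintype n']
    (ep : p ≃ p') (en : n ≃ n') (em : m ≃ m')
    (S : Matrix p n R) (X : Matrix n m M) :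
    sMul (Matrix.reindex ep en S) (Matrix.reindex en em X)
      = Matrix.reindex ep em (sMul S X) := by
  ext i j
  simp only [sMul, Matrix.reindex_apply, Matrix.submatrix_apply, Matrix.of_apply]
  exact Fintype.sum_equiv en.symm _ _ fun k => rfl

lemma mS_reindex {n n' m m' q q' : Type*} [Fintype m] [Fintype m']
    (en : n ≃ n') (em : m ≃ m') (eq' : q ≃ q')
    (X : Matrix n m M) (T : Matrix m q R) :
    mS (Matrix.reindex en em X) (Matrix.reindex em eq' T)
      = Matrix.reindex en eq' (mS X T) := by
  ext i j
  simp only [mS, Matrix.reindex_apply, Matrix.submatrix_apply, Matrix.of_apply]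
  exact Fintype.sum_equiv em.symm _ _ fun k => rfl

lemma sMul_fromBlocks {p p' n n' m m' : Type*} [Fintype n] [Fintype n']
    (A : Matrix p n R) (B : Matrix p n' R) (C : Matrix p' n R) (D : Matrix p' n' R)
    (E : Matrix n m M) (F : Matrix n m' M) (G : Matrix n' m M) (H : Matrix n' m' M) :
    sMul (Matrix.fromBlocks A B C D) (Matrix.fromBlocks E F G H) =
      Matrix.fromBlocks (sMul A E + sMul B G) (sMul A F + sMul B H)
        (sMul C E + sMul D G) (sMul C F + sMul D H) := by
  ext i j
  cases i <;> cases j <;>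
    simp [sMul, Matrix.fromBlocks, Fintype.sum_sum_type]

lemma mS_fromBlocks {n n' m m' q q' : Type*} [Fintype m] [Fintype m']
    (E : Matrix n m M) (F : Matrix n m' M) (G : Matrix n' m M) (H : Matrix n' m' M)
    (A : Matrix m q R) (B : Matrix m q' R) (C : Matrix m' q R) (D : Matrix m' q' R) :
    mS (Matrix.fromBlocks E F G H) (Matrix.fromBlocks A B C D) =
      Matrix.fromBlocks (mS E A + mS F C) (mS E B + mS F D)
        (mS G A + mS H C) (mS G B + mS H D) := by
  ext i j
  cases i <;> cases j <;>
    simp [mS, Matrix.fromBlocks, Fintype.sum_sum_type]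

/-- General (1,2)-block of a possibly rectangular matrix. -/
def tb12 {N : Type*} {a b c d : ℕ} (W : Matrix (Fin (a + b)) (Fin (c + d)) N) :
    Matrix (Fin a) (Fin d) N :=
  Matrix.toBlocks₁₂ ((Matrix.reindex finSumFinEquiv.symm finSumFinEquiv.symm) W)

lemma tb12_reindex {N : Type*} {a b c d : ℕ}
    (A : Matrix (Fin a) (Fin c) N) (B : Matrix (Fin a) (Fin d) N)
    (C : Matrix (Fin b) (Fin c) N) (D : Matrix (Fin b) (Fin d) N) :
    tb12 (Matrix.reindex finSumFinEquiv finSumFinEquiv (Matrix.fromBlocks A B C D)) = B := by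
  ext i j
  simp [tb12, Matrix.toBlocks₁₂]

lemma blk12_eq_tb12 {N : Type*} {a b : ℕ} (W : Matrix (Fin (a + b)) (Fin (a + b)) N) :
    blk12 W = tb12 W := rfl

lemma blk12_reindex {N : Type*} {a b : ℕ}
    (A : Matrix (Fin a) (Fin a) N) (B : Matrix (Fin a) (Fin b) N)
    (C : Matrix (Fin b) (Fin a) N) (D : Matrix (Fin b) (Fin b) N) :
    blk12 (Matrix.reindex finSumFinEquiv finSumFinEquiv (Matrix.fromBlocks A B C D)) = B :=
  tb12_reindex A B C D

lemma eq_reindex_blocks {N : Type*} {a b : ℕ} (W : Matrix (Fin (a + b)) (Fin (a + b)) N) :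
    W = Matrix.reindex finSumFinEquiv finSumFinEquiv
      (Matrix.fromBlocks (blk11 W) (blk12 W) (blk21 W) (blk22 W)) := by
  rw [blk11, blk12, blk21, blk22, Matrix.fromBlocks_toBlocks]
  simp

end Helpers
section Main

variable {R : Type*} [CommRing R] {M : Type*} [AddCommGroup M] [Module R M]
  {N : Type*} [AddCommGroup N] [Module R N]

lemma tb12_mS_blocks {a b c d : ℕ} (U : Matrix (Fin (a + b)) (Fin (a + b)) N)
    (A : Matrix (Fin a) (Fin c) R) (B : Matrix (Fin a) (Fin d) R)
    (C : Matrix (Fin b) (Fin c) R) (D : Matrix (Fin b) (Fin d) R) :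
    tb12 (mS U (Matrix.reindex finSumFinEquiv finSumFinEquiv (Matrix.fromBlocks A B C D)))
      = mS (blk11 U) B + mS (blk12 U) D := by
  conv_lhs => rw [eq_reindex_blocks U]
  rw [mS_reindex, mS_fromBlocks, tb12_reindex]

lemma tb12_sMul_blocks {a b c d : ℕ} (U : Matrix (Fin (c + d)) (Fin (c + d)) N)
    (A : Matrix (Fin a) (Fin c) R) (B : Matrix (Fin a) (Fin d) R)
    (C : Matrix (Fin b) (Fin c) R) (D : Matrix (Fin b) (Fin d) R) :
    tb12 (sMul (Matrix.reindex finSumFinEquiv finSumFinEquiv (Matrix.fromBlocks A B C D)) U)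
      = sMul A (blk12 U) + sMul B (blk22 U) := by
  conv_lhs => rw [eq_reindex_blocks U]
  rw [sMul_reindex, sMul_fromBlocks, tb12_reindex]

lemma f_intertwine (Ω : ∀ n : ℕ, Set (Matrix (Fin n) (Fin n) M))
    (f : ∀ n : ℕ, Matrix (Fin n) (Fin n) M → Matrix (Fin n) (Fin n) N)
    (hΩ : IsNCSet Ω) (hds : RespectsDirSums Ω f) (hsim : RespectsSim R Ω f) :
    RespectsIntertwining R Ω f := by
  intro n m X Y T hX hY hXT
  rw [mulScal_eq, scalMul_eq] at hXT
  set Sb : Matrix (Fin (n + m)) (Fin (n + m)) R :=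
    Matrix.reindex finSumFinEquiv finSumFinEquiv (Matrix.fromBlocks 1 T 0 1) with hSb
  set Tb : Matrix (Fin (n + m)) (Fin (n + m)) R :=
    Matrix.reindex finSumFinEquiv finSumFinEquiv (Matrix.fromBlocks 1 (-T) 0 1) with hTb
  have hST : Sb * Tb = 1 := by
    rw [hSb, hTb]
    simp [Matrix.reindex_apply, Matrix.submatrix_mul_equiv, Matrix.fromBlocks_multiply,
      Matrix.fromBlocks_one, Matrix.submatrix_one_equiv]
  have hTS : Tb * Sb = 1 := by
    rw [hSb, hTb]
    simp [Matrix.reindex_apply, Matrix.submatrix_mul_equiv, Matrix.fromBlocks_multiply,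
      Matrix.fromBlocks_one, Matrix.submatrix_one_equiv]
  have hkey : scalMul Sb (mulScal (dSum X Y) Tb) = dSum X Y := by
    rw [scalMul_eq, mulScal_eq, hSb, hTb, dSum, mS_reindex, mS_fromBlocks,
      sMul_reindex, sMul_fromBlocks]
    simp only [mS_one, mS_zero_left, mS_zero_right, mS_neg_right, sMul_one,
      sMul_zero_left, sMul_zero_right, add_zero, zero_add, neg_zero, hXT,
      neg_add_cancel]
  have hDmem : dSum X Y ∈ Ω (n + m) := hΩ n m X Y hX hY
  have hmem2 : scalMul Sb (mulScal (dSum X Y) Tb) ∈ Ω (n + m) := by rw [hkey]; exact hDmem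
  have hsimeq := hsim (n + m) (dSum X Y) Sb Tb hDmem hST hTS hmem2
  rw [hkey, hds n m X Y hX hY] at hsimeq
  have h12 := congrArg blk12 hsimeq
  rw [scalMul_eq, mulScal_eq, hSb, hTb, dSum, mS_reindex, mS_fromBlocks,
    sMul_reindex, sMul_fromBlocks, blk12_eq_tb12, blk12_eq_tb12, tb12_reindex,
    tb12_reindex] at h12
  simp only [mS_one, mS_zero_left, mS_zero_right, mS_neg_right, sMul_one,
    sMul_zero_left, sMul_zero_right, add_zero, zero_add, neg_zero] at h12
  rw [mulScal_eq, scalMul_eq]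
  have := h12.symm
  rwa [neg_add_eq_zero] at this

lemma upTri_mem (Ω : ∀ n : ℕ, Set (Matrix (Fin n) (Fin n) M))
    (hsi : SimInvariant R Ω) (hra : RightAdmissible R Ω) {n m : ℕ}
    (X : Matrix (Fin n) (Fin n) M) (Y : Matrix (Fin m) (Fin m) M)
    (Z : Matrix (Fin n) (Fin m) M) (hX : X ∈ Ω n) (hY : Y ∈ Ω m) :
    upTri X Z Y ∈ Ω (n + m) := by
  obtain ⟨r, hr⟩ := hra n m X Y Z hX hY
  set Sb : Matrix (Fin (n + m)) (Fin (n + m)) R :=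
    Matrix.reindex finSumFinEquiv finSumFinEquiv
      (Matrix.fromBlocks (((r⁻¹ : Rˣ) : R) • 1) 0 0 1) with hSb
  set Tb : Matrix (Fin (n + m)) (Fin (n + m)) R :=
    Matrix.reindex finSumFinEquiv finSumFinEquiv
      (Matrix.fromBlocks (((r : Rˣ) : R) • 1) 0 0 1) with hTb
  have hST : Sb * Tb = 1 := by
    rw [hSb, hTb]
    simp [Matrix.reindex_apply, Matrix.submatrix_mul_equiv, Matrix.fromBlocks_multiply,
      Matrix.fromBlocks_one, Matrix.submatrix_one_equiv, Matrix.smul_mul,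
      Matrix.mul_smul, smul_smul]
  have hTS : Tb * Sb = 1 := by
    rw [hSb, hTb]
    simp [Matrix.reindex_apply, Matrix.submatrix_mul_equiv, Matrix.fromBlocks_multiply,
      Matrix.fromBlocks_one, Matrix.submatrix_one_equiv, Matrix.smul_mul,
      Matrix.mul_smul, smul_smul]
  have hkey : scalMul Sb (mulScal (upTri X ((r : R) • Z) Y) Tb) = upTri X Z Y := by
    rw [scalMul_eq, mulScal_eq, hSb, hTb, upTri, upTri, mS_reindex, mS_fromBlocks,
      sMul_reindex, sMul_fromBlocks]
    simp only [mS_one, mS_zero_left, mS_zero_right, mS_smul_one, sMul_one,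
      sMul_zero_left, sMul_zero_right, sMul_smul_one, sMul_smul_right, add_zero,
      zero_add, smul_smul, Units.inv_mul, Units.mul_inv, smul_zero, one_smul]
  have := hsi (n + m) (upTri X ((r : R) • Z) Y) Sb Tb hr hST hTS
  rwa [hkey] at this

end Main
/-- `Δ_R f` respects intertwining in both arguments:
if `T X = X̃ T` and `Y S = S Ỹ` then `T · Δ_R f(X,Y)(Z) · S = Δ_R f(X̃,Ỹ)(T Z S)`. -/
theorem deltaR_respects_intertwinings
    {R : Type*} [CommRing R] {M : Type*} [AddCommGroup M] [Module R M]
    {N : Type*} [AddCommGroup N] [Module R N]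
    (Ω : ∀ n : ℕ, Set (Matrix (Fin n) (Fin n) M))
    (f : ∀ n : ℕ, Matrix (Fin n) (Fin n) M → Matrix (Fin n) (Fin n) N)
    (hΩ : IsNCSet Ω) (hsi : SimInvariant R Ω) (hra : RightAdmissible R Ω)
    (hds : RespectsDirSums Ω f) (hsim : RespectsSim R Ω f)
    {n nt m mt : ℕ}
    (X : Matrix (Fin n) (Fin n) M) (Xt : Matrix (Fin nt) (Fin nt) M)
    (Y : Matrix (Fin m) (Fin m) M) (Yt : Matrix (Fin mt) (Fin mt) M)
    (Z : Matrix (Fin n) (Fin m) M)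
    (T : Matrix (Fin nt) (Fin n) R) (S : Matrix (Fin m) (Fin mt) R)
    (hX : X ∈ Ω n) (hXt : Xt ∈ Ω nt) (hY : Y ∈ Ω m) (hYt : Yt ∈ Ω mt)
    (hT : scalMul T X = mulScal Xt T) (hS : mulScal Y S = scalMul S Yt) :
    scalMul T (mulScal (deltaR R f X Y Z) S) = deltaR R f Xt Yt (scalMul T (mulScal Z S)) := by
  have hint := f_intertwine Ω f hΩ hds hsim
  have hW : upTri X Z Y ∈ Ω (n + m) := upTri_mem Ω hsi hra X Y Z hX hY
  have hW' : upTri Xt (scalMul T Z) Y ∈ Ω (nt + m) :=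
    upTri_mem Ω hsi hra Xt Y (scalMul T Z) hXt hY
  have hW'' : upTri Xt (scalMul T (mulScal Z S)) Yt ∈ Ω (nt + mt) :=
    upTri_mem Ω hsi hra Xt Yt (scalMul T (mulScal Z S)) hXt hYt
  rw [scalMul_eq, mulScal_eq] at hT hS
  set Q1 : Matrix (Fin (nt + m)) (Fin (n + m)) R :=
    Matrix.reindex finSumFinEquiv finSumFinEquiv (Matrix.fromBlocks T 0 0 1) with hQ1
  have h1 : mulScal (upTri Xt (scalMul T Z) Y) Q1 = scalMul Q1 (upTri X Z Y) := by
    rw [hQ1]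
    simp only [mulScal_eq, scalMul_eq, upTri]
    rw [mS_reindex, mS_fromBlocks, sMul_reindex, sMul_fromBlocks]
    simp only [mS_one, mS_zero_left, mS_zero_right, sMul_one,
      sMul_zero_left, sMul_zero_right, add_zero, zero_add, hT]
  have hf1 := hint (nt + m) (n + m) _ _ Q1 hW' hW h1
  simp only [mulScal_eq, scalMul_eq] at hf1
  have e1 := congrArg tb12 hf1
  rw [hQ1, tb12_mS_blocks, tb12_sMul_blocks] at e1
  simp only [mS_one, mS_zero_right, sMul_zero_left, add_zero, zero_add] at e1
  set Q2 : Matrix (Fin (nt + m)) (Fin (nt + mt)) R :=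
    Matrix.reindex finSumFinEquiv finSumFinEquiv (Matrix.fromBlocks 1 0 0 S) with hQ2
  have h2 : mulScal (upTri Xt (scalMul T Z) Y) Q2
      = scalMul Q2 (upTri Xt (scalMul T (mulScal Z S)) Yt) := by
    rw [hQ2]
    simp only [mulScal_eq, scalMul_eq, upTri]
    rw [mS_reindex, mS_fromBlocks, sMul_reindex, sMul_fromBlocks]
    simp only [mS_one, mS_zero_left, mS_zero_right, sMul_one,
      sMul_zero_left, sMul_zero_right, add_zero, zero_add, hS, sMul_mS]
  have hf2 := hint (nt + m) (nt + mt) _ _ Q2 hW' hW'' h2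
  simp only [mulScal_eq, scalMul_eq] at hf2
  have e2 := congrArg tb12 hf2
  rw [hQ2, tb12_mS_blocks, tb12_sMul_blocks] at e2
  simp only [mS_zero_right, sMul_one, sMul_zero_left, add_zero, zero_add] at e2
  simp only [deltaR, scalMul_eq, mulScal_eq]
  rw [← e2, e1, sMul_mS]
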